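/- arXiv:math/0503489 — 4 statements merged into one kernel-verified Lean document; each statement's English description precedes it below -/
import Mathlib

section
/- Let S be a semigroup, e an idempotent of S, and suppose the set √e = {x ∈ S : x^m = e for some m ≥ 1} is closed under multiplication. Then √e is an isolated subsemigroup of S, and it is minimal among isolated subsemigroups: every isolated subsemigroup of S containing some element of √e contains all of √e. -/
/-- `spow x n = x^(n+1)`: the positive powers of `x` in a semigroup. -/
def spow {S : Type*} [Semigroup S] (x : S) : ℕ → S
  | 0 => x
  | n + 1 => spow x n * x

lemma spow_mul_spow {S : Type*} [Semigroup S] (x : S) (n m : ℕ) :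
    spow x n * spow x m = spow x (n + m + 1) := by
  induction m with
  | zero => rfl
  | succ m ih => show spow x n * (spow x m * x) = _
                 rw [← mul_assoc, ih]; rfl

lemma spow_spow {S : Type*} [Semigroup S] (x : S) (n m : ℕ) :
    ∃ k : ℕ, spow (spow x n) m = spow x k := by
  induction m with
  | zero => exact ⟨n, rfl⟩
  | succ m ih =>
    obtain ⟨k, hk⟩ := ih
    exact ⟨k + n + 1, by show spow (spow x n) m * spow x n = _; rw [hk, spow_mul_spow]⟩

lemma spow_mem {S : Type*} [Semigroup S] {T : Set S}
    (hT : ∀ x ∈ T, ∀ y ∈ T, x * y ∈ T) {x : S} (hx : x ∈ T) (n : ℕ) :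
    spow x n ∈ T := by
  induction n with
  | zero => exact hx
  | succ n ih => exact hT _ ih _ hx

/-- If `e` is an idempotent and `√e = {x : x^m = e for some m ≥ 1}` is closed under
multiplication, then `√e` is an isolated subsemigroup, minimal in the sense that
every isolated subsemigroup meeting `√e` contains it. -/
theorem sqrt_idempotent_minimal_isolated {S : Type*} [Semigroup S] (e : S)
    (he : e * e = e)
    (hclosed : ∀ x ∈ {x : S | ∃ m : ℕ, spow x m = e},
      ∀ y ∈ {x : S | ∃ m : ℕ, spow x m = e}, x * y ∈ {x : S | ∃ m : ℕ, spow x m = e}) :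
    (∀ (x : S) (n : ℕ), spow x n ∈ {x : S | ∃ m : ℕ, spow x m = e} →
        x ∈ {x : S | ∃ m : ℕ, spow x m = e}) ∧
      (∀ T : Set S, (∀ x ∈ T, ∀ y ∈ T, x * y ∈ T) →
        (∀ (x : S) (n : ℕ), spow x n ∈ T → x ∈ T) →
        (∃ x ∈ T, x ∈ {x : S | ∃ m : ℕ, spow x m = e}) →
        {x : S | ∃ m : ℕ, spow x m = e} ⊆ T) := by
  constructor
  · rintro x n ⟨m, hm⟩
    obtain ⟨k, hk⟩ := spow_spow x n m
    exact ⟨k, by rw [← hk, hm]⟩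
  · rintro T hTmul hTiso ⟨x, hxT, m, hm⟩ y ⟨k, hk⟩
    have heT : e ∈ T := hm ▸ spow_mem hTmul hxT m
    exact hTiso y k (hk ▸ heT)
end

section
/- Let α₁, α₂ ∈ T_n (the full transformation semigroup on {1,…,n}). If there exist permutations σ, τ of {1,…,n} with α₁σ = τα₂, then the variants (T_n, *_{α₁}) and (T_n, *_{α₂}) are isomorphic as semigroups, where β *_{α} γ = βαγ. -/
/-- The sandwich multiplication `β *_α γ = βαγ` on `T_n` (maps composed left to right):
`(β *_α γ)(x) = γ(α(β(x)))`. -/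
def vmul {n : ℕ} (α β γ : Fin n → Fin n) : Fin n → Fin n :=
  fun x => γ (α (β x))

/-- If `α₁ σ = τ α₂` for some permutations `σ, τ`, then the variants
`(T_n, *_{α₁})` and `(T_n, *_{α₂})` are isomorphic as semigroups. -/
theorem variants_isomorphic {n : ℕ} (α₁ α₂ : Fin n → Fin n)
    (σ τ : Equiv.Perm (Fin n)) (h : ∀ x, σ (α₁ x) = α₂ (τ x)) :
    ∃ Φ : (Fin n → Fin n) → (Fin n → Fin n), Function.Bijective Φ ∧
      ∀ β γ : Fin n → Fin n, Φ (vmul α₁ β γ) = vmul α₂ (Φ β) (Φ γ) := by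
  refine ⟨fun β x => τ (β (σ⁻¹ x)), ?_, ?_⟩
  · rw [Function.bijective_iff_has_inverse]
    refine ⟨fun β x => τ⁻¹ (β (σ x)), fun β => ?_, fun β => ?_⟩ <;>
      funext x <;> simp
  · intro β γ
    funext x
    simp only [vmul]
    congr 1
    have := h (β (σ⁻¹ x))
    have : σ⁻¹ (α₂ (τ (β (σ⁻¹ x)))) = α₁ (β (σ⁻¹ x)) := by
      rw [← h]; simp
    rw [this]
end

section
/- Let α ∈ T_n be an idempotent with kernel blocks A₁,…,A_l and image {a₁,…,a_l}, a_i ∈ A_i. An element ε ∈ T_n of rank k with kernel blocks E₁,…,E_k and image {e₁,…,e_k} (ε(E_i) = {e_i}) satisfies ε α ε = ε if and only if there is an injection f : {1,…,k} → {1,…,l} such that e_i ∈ A_{f(i)} and a_{f(i)} ∈ E_i for all i = 1,…,k. -/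
/-- Description of idempotents of the variant `(T_n, *_α)`: with `α` an idempotent
whose image is `{a 1, …, a l}` (so its kernel blocks are `A i = α⁻¹(a i)`), and
`ε` of rank `k` with image `{e 1, …, e k}` (kernel blocks `E i = ε⁻¹(e i)`),
we have `εαε = ε` iff there is an injection `f : {1,…,k} → {1,…,l}` with
`e i ∈ A (f i)` (i.e. `α (e i) = a (f i)`) and `a (f i) ∈ E i`
(i.e. `ε (a (f i)) = e i`) for all `i`. -/
theorem idempotent_of_variant_iff {n l k : ℕ} (α : Fin n → Fin n)
    (hα : ∀ x, α (α x) = α x)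
    (a : Fin l → Fin n) (ha : Function.Injective a)
    (hrangeα : Set.range α = Set.range a)
    (ε : Fin n → Fin n) (e : Fin k → Fin n) (he : Function.Injective e)
    (hrangeε : Set.range ε = Set.range e) :
    (∀ x, ε (α (ε x)) = ε x) ↔
      ∃ f : Fin k → Fin l, Function.Injective f ∧
        (∀ i, α (e i) = a (f i)) ∧ (∀ i, ε (a (f i)) = e i) := by
  constructor
  · intro h
    have key : ∀ i : Fin k, ∃ j : Fin l, α (e i) = a j := by
      intro i
      have : α (e i) ∈ Set.range a := by rw [← hrangeα]; exact ⟨e i, rfl⟩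
      obtain ⟨j, hj⟩ := this
      exact ⟨j, hj.symm⟩
    choose f hf using key
    have hεe : ∀ i, ε (α (e i)) = e i := by
      intro i
      have : e i ∈ Set.range ε := by rw [hrangeε]; exact ⟨i, rfl⟩
      obtain ⟨x, hx⟩ := this
      rw [← hx, h]
    refine ⟨f, ?_, hf, ?_⟩
    · intro i j hij
      apply he
      have hi : ε (a (f i)) = e i := by rw [← hf i]; exact hεe i
      have hj : ε (a (f j)) = e j := by rw [← hf j]; exact hεe j
      rw [← hi, ← hj, hij]
    · intro i; rw [← hf i, hεe i]
  · rintro ⟨f, hfinj, h1, h2⟩ x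
    have : ε x ∈ Set.range e := by rw [← hrangeε]; exact ⟨x, rfl⟩
    obtain ⟨i, hi⟩ := this
    rw [← hi, h1, h2]
end

section
/- Let α ∈ T_n be an idempotent of rank l with image A = {a₁,…,a_l}. The map φ̄ : (T_n, *_α) → T(A) sending β to the restriction of βα to A is a surjective semigroup homomorphism onto the full transformation semigroup T(A) on A. -/
/-- The map `φ̄ : β ↦ (βα)|_A` where `A = im(α)`: it lands in `A`. -/
def phibar {n : ℕ} (α : Fin n → Fin n) (β : Fin n → Fin n) :
    Set.range α → Set.range α :=
  fun x => ⟨α (β x.1), ⟨β x.1, rfl⟩⟩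

/-- `φ̄ : (T_n, *_α) → T(A)`, `β ↦ (βα)|_A`, is a surjective semigroup
homomorphism onto the full transformation semigroup on `A = im(α)`. -/
theorem phibar_epimorphism {n : ℕ} (α : Fin n → Fin n) (hα : ∀ x, α (α x) = α x) :
    (∀ β γ : Fin n → Fin n,
      phibar α (vmul α β γ) = phibar α γ ∘ phibar α β) ∧
    Function.Surjective (phibar α) := by
  constructor
  · intro β γ
    funext x
    simp [phibar, vmul]
  · intro f
    refine ⟨fun x => (f ⟨α x, ⟨x, rfl⟩⟩).1, ?_⟩
    funext x
    obtain ⟨a, y, rfl⟩ := x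
    apply Subtype.ext
    have h1 : (⟨α (α y), ⟨α y, rfl⟩⟩ : Set.range α) = ⟨α y, ⟨y, rfl⟩⟩ :=
      Subtype.ext (hα y)
    simp only [phibar, h1]
    obtain ⟨b, hb⟩ := (f ⟨α y, ⟨y, rfl⟩⟩).2
    rw [← hb, hα]
end
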